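/- Given data matrices Φ_0, …, Φ_P ∈ ℝ^{M×N}, matrices C⁽¹⁾, …, C⁽ᴹ⁾ ∈ ℝ^{N×n}, a matrix Ā ∈ ℝ^{n×n}, and a constant β ≥ 0, let Θ∘ ∈ ℝ^{N×n} satisfy det(Θ∘ᵀC⁽ⁱ⁾ + C⁽ⁱ⁾ᵀΘ∘ − I) ≥ 1 for all i (so its barrier term vanishes in J_μ for every μ), and set J∘ := (1/(2MP))·Σ_{k=1}^{P} ‖Φ_kΘ∘ − Φ_{k−1}Θ∘Āᵀ‖_F² + (β/2)‖Θ∘‖_F², assumed positive. Suppose that for every μ > 0 there is Θ_μ ∈ ℝ^{N×n} with each Θ_μᵀC⁽ⁱ⁾ + C⁽ⁱ⁾ᵀΘ_μ − I positive definite and J_μ(Θ_μ) ≤ J_μ(Θ∘) = J∘. Then the infimum over μ > 0 of L(Θ_μ)² is at most 2·J∘. -/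

import Mathlib

open Matrix

/-- Squared Frobenius norm of a real matrix: `‖X‖_F² = Σᵢⱼ Xᵢⱼ²`. -/
noncomputable def frobSq {m n : ℕ} (X : Matrix (Fin m) (Fin n) ℝ) : ℝ :=
  ∑ i, ∑ j, X i j ^ 2

/-- The regularized barrier objective `J_μ(Θ)`. -/
noncomputable def Jobj (M N n P : ℕ) (Φ : ℕ → Matrix (Fin M) (Fin N) ℝ)
    (C : Fin M → Matrix (Fin N) (Fin n) ℝ) (Abar : Matrix (Fin n) (Fin n) ℝ)
    (β μ : ℝ) (Θ : Matrix (Fin N) (Fin n) ℝ) : ℝ :=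
  (1 / (2 * M * P)) * ∑ k ∈ Finset.range P, frobSq (Φ (k + 1) * Θ - Φ k * Θ * Abarᵀ)
    + (β / 2) * frobSq Θ
    + (μ / M) * ∑ i, max 0 (-Real.log (Θᵀ * C i + (C i)ᵀ * Θ - 1).det)

/-- The scaled error `L(Θ)`. -/
noncomputable def Lscaled (M N n P : ℕ) (Φ : ℕ → Matrix (Fin M) (Fin N) ℝ)
    (C : Fin M → Matrix (Fin N) (Fin n) ℝ) (Abar : Matrix (Fin n) (Fin n) ℝ)
    (Θ : Matrix (Fin N) (Fin n) ℝ) : ℝ :=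
  Real.sqrt ((1 / (M * P)) * ∑ k ∈ Finset.range P, frobSq (Φ (k + 1) * Θ - Φ k * Θ * Abarᵀ))
    / ((1 / M : ℝ) * ∑ i, |(Θᵀ * C i).det|)

/-!
If `J_μ(Θ_μ) ≤ J∘`, the three nonnegative terms of `J_μ` are each at most `J∘`: the residual gives
`L`'s numerator squared `≤ 2J∘`, and the barrier gives `det(S_i + S_iᵀ - 1) ≥ exp(-MJ∘/μ)` for
`S_i = Θ_μᵀC⁽ⁱ⁾`. Writing `H_i = (S_i + S_iᵀ)/2`, AM–GM on eigenvalues gives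
`det(2H_i - 1) ≤ (det H_i)²`, and Ostrowski–Taussky (adding a skew matrix to a positive definite
one does not decrease `|det|`) gives `det H_i ≤ |det S_i|`. Hence `L(Θ_μ)² ≤ 2J∘·exp(MJ∘/μ)`,
and letting `μ → ∞` bounds the infimum by `2J∘`.
-/

namespace Matrix

variable {m : Type*} [Fintype m] [DecidableEq m]

theorem IsHermitian.det_one_add {A : Matrix m m ℝ} (hA : A.IsHermitian) :
    (1 + A).det = ∏ i, (1 + hA.eigenvalues i) := by
  set U : Matrix m m ℝ := (hA.eigenvectorUnitary : Matrix m m ℝ)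
  have hUU : U * star U = 1 := (Matrix.mem_unitaryGroup_iff).mp hA.eigenvectorUnitary.2
  have hconj : (1 : Matrix m m ℝ) + A =
      U * diagonal (fun i => 1 + hA.eigenvalues i) * star U := by
    rw [← diagonal_one, ← diagonal_add, diagonal_one, mul_add, mul_one, add_mul, hUU]
    conv_lhs => rw [hA.spectral_theorem, Unitary.conjStarAlgAut_apply]
    rfl
  rw [hconj, det_mul_right_comm, hUU, one_mul, det_diagonal]

theorem PosSemidef.one_le_det_one_add {A : Matrix m m ℝ} (hA : A.PosSemidef) :
    1 ≤ (1 + A).det := by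
  rw [hA.isHermitian.det_one_add]
  exact Finset.one_le_prod fun i _ => by linarith [hA.eigenvalues_nonneg i]

theorem PosSemidef.det_le_det_half_smul_add_one_sq {T : Matrix m m ℝ} (hT : T.PosSemidef) :
    T.det ≤ ((1 / 2 : ℝ) • (T + 1)).det ^ 2 := by
  have hev := hT.eigenvalues_nonneg
  rw [det_smul, add_comm, hT.isHermitian.det_one_add, hT.isHermitian.det_eq_prod_eigenvalues,
    ← Finset.card_univ, ← Finset.prod_const, ← Finset.prod_mul_distrib, ← Finset.prod_pow]
  refine Finset.prod_le_prod (fun i _ => hev i) fun i _ => ?_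
  rw [RCLike.ofReal_real_eq_id, id]
  nlinarith [sq_nonneg (1 - hT.isHermitian.eigenvalues i)]

theorem one_le_abs_det_one_add_of_transpose_eq_neg {K : Matrix m m ℝ} (hK : Kᵀ = -K) :
    1 ≤ |(1 + K).det| := by
  have hsq : (1 + K).det ^ 2 = (1 + Kᵀ * K).det := by
    have hmul : (1 + K) * (1 + K)ᵀ = 1 + Kᵀ * K := by
      rw [transpose_add, transpose_one, hK]
      noncomm_ring
    rw [← hmul, det_mul, det_transpose, sq]
  have hge : 1 ≤ (1 + K).det ^ 2 := by
    rw [hsq]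
    simpa using (posSemidef_conjTranspose_mul_self K).one_le_det_one_add
  nlinarith [sq_abs (1 + K).det, abs_nonneg (1 + K).det]

open scoped MatrixOrder in
/-- Ostrowski–Taussky: conjugating by `√H` turns `H + K` into `1 + K'` with `K'` skew. -/
theorem PosDef.det_le_abs_det_add_of_transpose_eq_neg {H K : Matrix m m ℝ} (hH : H.PosDef)
    (hK : Kᵀ = -K) : H.det ≤ |(H + K).det| := by
  set R := CFC.sqrt H
  have hRR : R * R = H := CFC.sqrt_mul_sqrt_self H hH.posSemidef.nonneg
  have hRsymm : Rᵀ = R := by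
    simpa [IsHermitian, conjTranspose_eq_transpose_of_trivial] using
      (CFC.sqrt_nonneg H).posSemidef.isHermitian
  have hRunit : IsUnit R.det := by
    refine isUnit_iff_ne_zero.mpr fun h => hH.det_pos.ne' ?_
    rw [← hRR, det_mul, h, zero_mul]
  set K' := R⁻¹ * K * R⁻¹
  have hK' : K'ᵀ = -K' := by
    simp only [K', transpose_mul, transpose_nonsing_inv, hRsymm, hK]
    noncomm_ring
  have hfactor : H + K = R * (1 + K') * R := by
    simp only [K', mul_add, add_mul, mul_one, ← mul_assoc, mul_nonsing_inv R hRunit, one_mul]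
    rw [mul_assoc _ R⁻¹ R, nonsing_inv_mul R hRunit, mul_one, hRR]
  have hdet : (H + K).det = H.det * (1 + K').det := by
    rw [hfactor, ← hRR, det_mul, det_mul, det_mul]
    ring
  rw [hdet, abs_mul, abs_of_pos hH.det_pos]
  exact le_mul_of_one_le_right hH.det_pos.le (one_le_abs_det_one_add_of_transpose_eq_neg hK')

theorem det_add_transpose_sub_one_le_sq_abs_det {S : Matrix m m ℝ} (hS : (S + Sᵀ - 1).PosDef) :
    (S + Sᵀ - 1).det ≤ |S.det| ^ 2 := by
  set H := (1 / 2 : ℝ) • (S + Sᵀ - 1 + 1)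
  have hH : H.PosDef := (hS.add PosDef.one).smul (by norm_num)
  have hS_eq : S = H + (1 / 2 : ℝ) • (S - Sᵀ) := by
    simp only [H, sub_add_cancel]
    module
  have hskew : ((1 / 2 : ℝ) • (S - Sᵀ))ᵀ = -((1 / 2 : ℝ) • (S - Sᵀ)) := by
    rw [transpose_smul, transpose_sub, transpose_transpose, ← smul_neg, neg_sub]
  calc (S + Sᵀ - 1).det ≤ H.det ^ 2 := hS.posSemidef.det_le_det_half_smul_add_one_sq
    _ ≤ |(H + (1 / 2 : ℝ) • (S - Sᵀ)).det| ^ 2 :=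
      pow_le_pow_left₀ hH.det_pos.le (hH.det_le_abs_det_add_of_transpose_eq_neg hskew) 2
    _ = |S.det| ^ 2 := by rw [← hS_eq]

end Matrix

open Filter Topology

theorem frobSq_nonneg {m n : ℕ} (X : Matrix (Fin m) (Fin n) ℝ) : 0 ≤ frobSq X :=
  Finset.sum_nonneg fun _ _ => Finset.sum_nonneg fun _ _ => sq_nonneg _

section Objective

variable {M N n P : ℕ} {Φ : ℕ → Matrix (Fin M) (Fin N) ℝ} {C : Fin M → Matrix (Fin N) (Fin n) ℝ}
  {Abar : Matrix (Fin n) (Fin n) ℝ} {β μ J : ℝ} {Θ : Matrix (Fin N) (Fin n) ℝ}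

theorem mse_nonneg :
    0 ≤ (1 / (M * P) : ℝ) * ∑ k ∈ Finset.range P, frobSq (Φ (k + 1) * Θ - Φ k * Θ * Abarᵀ) :=
  mul_nonneg (by positivity) (Finset.sum_nonneg fun _ _ => frobSq_nonneg _)

theorem mse_le_two_mul_of_Jobj_le (hβ : 0 ≤ β) (hμ : 0 ≤ μ)
    (hJ : Jobj M N n P Φ C Abar β μ Θ ≤ J) :
    (1 / (M * P) : ℝ) * ∑ k ∈ Finset.range P, frobSq (Φ (k + 1) * Θ - Φ k * Θ * Abarᵀ)
      ≤ 2 * J := by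
  have hreg : 0 ≤ (β / 2) * frobSq Θ := mul_nonneg (by positivity) (frobSq_nonneg Θ)
  have hbarrier : 0 ≤ (μ / M) * ∑ i, max 0 (-Real.log (Θᵀ * C i + (C i)ᵀ * Θ - 1).det) :=
    mul_nonneg (by positivity) (Finset.sum_nonneg fun _ _ => le_max_left _ _)
  have hhalf : (1 / (M * P) : ℝ) = 2 * (1 / (2 * M * P)) := by ring
  rw [Jobj] at hJ
  rw [hhalf]
  linarith

theorem barrier_le_of_Jobj_le (hM : 0 < M) (hβ : 0 ≤ β) (hμ : 0 < μ)
    (hJ : Jobj M N n P Φ C Abar β μ Θ ≤ J) :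
    ∑ i, max 0 (-Real.log (Θᵀ * C i + (C i)ᵀ * Θ - 1).det) ≤ M * J / μ := by
  have hreg : 0 ≤ (β / 2) * frobSq Θ := mul_nonneg (by positivity) (frobSq_nonneg Θ)
  have hmse : 0 ≤ (1 / (2 * M * P) : ℝ) *
      ∑ k ∈ Finset.range P, frobSq (Φ (k + 1) * Θ - Φ k * Θ * Abarᵀ) :=
    mul_nonneg (by positivity) (Finset.sum_nonneg fun _ _ => frobSq_nonneg _)
  rw [Jobj] at hJ
  have hM' : (0 : ℝ) < M := by exact_mod_cast hM
  rw [le_div_iff₀ hμ]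
  calc _ = M * (μ / M * ∑ i, max 0 (-Real.log (Θᵀ * C i + (C i)ᵀ * Θ - 1).det)) := by
        field_simp
    _ ≤ M * J := by gcongr; linarith

theorem exp_le_abs_det_of_Jobj_le (hM : 0 < M) (hβ : 0 ≤ β) (hμ : 0 < μ)
    (hpd : ∀ i, (Θᵀ * C i + (C i)ᵀ * Θ - 1).PosDef) (hJ : Jobj M N n P Φ C Abar β μ Θ ≤ J)
    (i : Fin M) : Real.exp (-(M * J / μ) / 2) ≤ |(Θᵀ * C i).det| := by
  have hST : (Θᵀ * C i)ᵀ = (C i)ᵀ * Θ := by rw [transpose_mul, transpose_transpose]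
  have hT := hpd i
  rw [← hST] at hT
  have hlog : -(M * J / μ) ≤ Real.log (Θᵀ * C i + (Θᵀ * C i)ᵀ - 1).det := by
    have hterm := Finset.single_le_sum (f := fun i =>
      max 0 (-Real.log (Θᵀ * C i + (C i)ᵀ * Θ - 1).det)) (fun _ _ => le_max_left _ _)
      (Finset.mem_univ i)
    rw [← hST] at hterm
    linarith [le_max_right 0 (-Real.log (Θᵀ * C i + (Θᵀ * C i)ᵀ - 1).det),
      barrier_le_of_Jobj_le hM hβ hμ hJ]
  refine le_of_pow_le_pow_left₀ two_ne_zero (abs_nonneg _) ?_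
  rw [← Real.exp_nat_mul, Nat.cast_two, mul_div_cancel₀ _ two_ne_zero]
  exact ((Real.le_log_iff_exp_le hT.det_pos).mp hlog).trans
    (det_add_transpose_sub_one_le_sq_abs_det hT)

theorem Lscaled_sq_le_of_Jobj_le (hM : 0 < M) (hβ : 0 ≤ β) (hμ : 0 < μ)
    (hpd : ∀ i, (Θᵀ * C i + (C i)ᵀ * Θ - 1).PosDef) (hJ : Jobj M N n P Φ C Abar β μ Θ ≤ J) :
    Lscaled M N n P Φ C Abar Θ ^ 2 ≤ 2 * J * Real.exp (M * J / μ) := by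
  set δ := (M : ℝ) * J / μ
  have hmean : Real.exp (-δ / 2) ≤ (1 / M : ℝ) * ∑ i, |(Θᵀ * C i).det| := by
    have hsum := Finset.card_nsmul_le_sum Finset.univ _ _ fun i _ =>
      exp_le_abs_det_of_Jobj_le hM hβ hμ hpd hJ i
    rw [Finset.card_univ, Fintype.card_fin, nsmul_eq_mul] at hsum
    rw [one_div, ← div_eq_inv_mul, le_div_iff₀ (by positivity)]
    linarith
  have hmse := mse_le_two_mul_of_Jobj_le hβ hμ.le hJ
  rw [Lscaled, div_pow, Real.sq_sqrt mse_nonneg]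
  calc _ ≤ 2 * J / Real.exp (-δ / 2) ^ 2 :=
        div_le_div₀ (mse_nonneg.trans hmse) hmse (by positivity)
          (pow_le_pow_left₀ (Real.exp_pos _).le hmean 2)
    _ = 2 * J * Real.exp δ := by
        rw [← Real.exp_nat_mul, div_eq_mul_inv, ← Real.exp_neg]
        ring_nf

end Objective

theorem csInf_image_Ioi_le_of_tendsto {f g : ℝ → ℝ} {a c : ℝ} (hf : BddBelow (f '' Set.Ioi a))
    (hfg : ∀ x > a, f x ≤ g x) (hg : Tendsto g atTop (𝓝 c)) : sInf (f '' Set.Ioi a) ≤ c :=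
  ge_of_tendsto hg <| (eventually_gt_atTop a).mono fun x hx =>
    (csInf_le hf ⟨x, hx, rfl⟩).trans (hfg x hx)

theorem optimized_loss_le_two_Jcirc_general (M N n P : ℕ) (hM : 0 < M)
    (Φ : ℕ → Matrix (Fin M) (Fin N) ℝ) (C : Fin M → Matrix (Fin N) (Fin n) ℝ)
    (Abar : Matrix (Fin n) (Fin n) ℝ) (β : ℝ) (hβ : 0 ≤ β)
    (Θc : Matrix (Fin N) (Fin n) ℝ)
    (Jc : ℝ)
    (Θμ : ℝ → Matrix (Fin N) (Fin n) ℝ)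
    (hΘμ : ∀ μ : ℝ, 0 < μ →
      (∀ i, ((Θμ μ)ᵀ * C i + (C i)ᵀ * Θμ μ - 1).PosDef) ∧
      Jobj M N n P Φ C Abar β μ (Θμ μ) ≤ Jobj M N n P Φ C Abar β μ Θc ∧
      Jobj M N n P Φ C Abar β μ Θc = Jc) :
    sInf ((fun μ => Lscaled M N n P Φ C Abar (Θμ μ) ^ 2) '' Set.Ioi (0 : ℝ)) ≤ 2 * Jc := by
  have hbound : ∀ μ > 0,
      Lscaled M N n P Φ C Abar (Θμ μ) ^ 2 ≤ 2 * Jc * Real.exp (M * Jc / μ) := fun μ hμ =>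
    have ⟨hpd, hle, heq⟩ := hΘμ μ hμ
    Lscaled_sq_le_of_Jobj_le hM hβ hμ hpd (hle.trans heq.le)
  have hlim : Tendsto (fun μ : ℝ => 2 * Jc * Real.exp (M * Jc / μ)) atTop (𝓝 (2 * Jc)) := by
    have hδ : Tendsto (fun μ : ℝ => (M : ℝ) * Jc / μ) atTop (𝓝 0) :=
      tendsto_const_nhds.div_atTop tendsto_id
    simpa using ((Real.continuous_exp.tendsto 0).comp hδ).const_mul (2 * Jc)
  exact csInf_image_Ioi_le_of_tendsto ⟨0, by rintro _ ⟨μ, -, rfl⟩; exact sq_nonneg _⟩ hbound hlim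

/-- If `Θ∘` has `det(Θ∘ᵀC⁽ⁱ⁾ + C⁽ⁱ⁾ᵀΘ∘ − I) ≥ 1` for all `i` (vanishing barrier term),
`J∘` is its mean-squared-error-plus-regularization objective (assumed positive), and for every
`μ > 0` a matrix `Θ_μ` with positive definite `Θ_μᵀC⁽ⁱ⁾ + C⁽ⁱ⁾ᵀΘ_μ − I` achieves
`J_μ(Θ_μ) ≤ J_μ(Θ∘) = J∘`, then `inf_{μ>0} L(Θ_μ)² ≤ 2 J∘`. -/
theorem optimized_loss_le_two_Jcirc (M N n P : ℕ) (hM : 0 < M) (hP : 0 < P)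
    (Φ : ℕ → Matrix (Fin M) (Fin N) ℝ) (C : Fin M → Matrix (Fin N) (Fin n) ℝ)
    (Abar : Matrix (Fin n) (Fin n) ℝ) (β : ℝ) (hβ : 0 ≤ β)
    (Θc : Matrix (Fin N) (Fin n) ℝ)
    (hdet : ∀ i, 1 ≤ (Θcᵀ * C i + (C i)ᵀ * Θc - 1).det)
    (Jc : ℝ)
    (hJc : Jc = (1 / (2 * M * P)) * ∑ k ∈ Finset.range P,
        frobSq (Φ (k + 1) * Θc - Φ k * Θc * Abarᵀ) + (β / 2) * frobSq Θc)
    (hJcpos : 0 < Jc)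
    (Θμ : ℝ → Matrix (Fin N) (Fin n) ℝ)
    (hΘμ : ∀ μ : ℝ, 0 < μ →
      (∀ i, ((Θμ μ)ᵀ * C i + (C i)ᵀ * Θμ μ - 1).PosDef) ∧
      Jobj M N n P Φ C Abar β μ (Θμ μ) ≤ Jobj M N n P Φ C Abar β μ Θc ∧
      Jobj M N n P Φ C Abar β μ Θc = Jc) :
    sInf ((fun μ => Lscaled M N n P Φ C Abar (Θμ μ) ^ 2) '' Set.Ioi (0 : ℝ)) ≤ 2 * Jc :=
  optimized_loss_le_two_Jcirc_general M N n P hM Φ C Abar β hβ Θc Jc Θμ hΘμ
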